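/- The Casimir element Λ of U_q(sl_2) is not invertible: there is no element x ∈ U_q(sl_2) with Λx = 1. More precisely, for every b ∈ U_q(sl_2), Λb ≠ 1. -/
import Mathlib


/-- The defining relations of `U_q(sl₂)` on the free algebra on four generators
`E = ι 0`, `F = ι 1`, `K = ι 2`, `K⁻¹ = ι 3`. -/
inductive UqRel (𝕜 : Type*) [Field 𝕜] (q : 𝕜) :
    FreeAlgebra 𝕜 (Fin 4) → FreeAlgebra 𝕜 (Fin 4) → Prop
  | KKinv : UqRel 𝕜 q (FreeAlgebra.ι 𝕜 2 * FreeAlgebra.ι 𝕜 3) 1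
  | KinvK : UqRel 𝕜 q (FreeAlgebra.ι 𝕜 3 * FreeAlgebra.ι 𝕜 2) 1
  | KE : UqRel 𝕜 q (FreeAlgebra.ι 𝕜 2 * FreeAlgebra.ι 𝕜 0)
      (q ^ 2 • (FreeAlgebra.ι 𝕜 0 * FreeAlgebra.ι 𝕜 2))
  | KF : UqRel 𝕜 q (FreeAlgebra.ι 𝕜 2 * FreeAlgebra.ι 𝕜 1)
      ((q ^ 2)⁻¹ • (FreeAlgebra.ι 𝕜 1 * FreeAlgebra.ι 𝕜 2))
  | EF : UqRel 𝕜 q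
      (FreeAlgebra.ι 𝕜 0 * FreeAlgebra.ι 𝕜 1 - FreeAlgebra.ι 𝕜 1 * FreeAlgebra.ι 𝕜 0)
      ((q - q⁻¹)⁻¹ • (FreeAlgebra.ι 𝕜 2 - FreeAlgebra.ι 𝕜 3))

/-- The quantum group `U_q(sl₂)` presented by generators and relations. -/
abbrev Uq (𝕜 : Type*) [Field 𝕜] (q : 𝕜) := RingQuot (UqRel 𝕜 q)

/-- The generators `E, F, K, K⁻¹` of `U_q(sl₂)`. -/
noncomputable def UqGen (𝕜 : Type*) [Field 𝕜] (q : 𝕜) (i : Fin 4) : Uq 𝕜 q :=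
  RingQuot.mkAlgHom 𝕜 (UqRel 𝕜 q) (FreeAlgebra.ι 𝕜 i)

/-- The Casimir element `Λ = (q − q⁻¹)² E F + q⁻¹ K + q K⁻¹` of `U_q(sl₂)`. -/
noncomputable def UqCasimir (𝕜 : Type*) [Field 𝕜] (q : 𝕜) : Uq 𝕜 q :=
  (q - q⁻¹) ^ 2 • (UqGen 𝕜 q 0 * UqGen 𝕜 q 1) + q⁻¹ • UqGen 𝕜 q 2 + q • UqGen 𝕜 q 3

set_option synthInstance.maxHeartbeats 1000000
set_option maxHeartbeats 1000000

namespace UqNonInv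

variable (𝕜 : Type*) [Field 𝕜] (q : 𝕜)

noncomputable abbrev Sq : Type _ :=
  Polynomial 𝕜 ⧸ Ideal.span {Polynomial.X ^ 2 + Polynomial.C (q⁻¹ * q⁻¹)}

noncomputable def lam : Sq 𝕜 q := Ideal.Quotient.mk _ Polynomial.X

noncomputable def lamInv : Sq 𝕜 q := (-(q * q)) • lam 𝕜 q

lemma lam_sq : lam 𝕜 q * lam 𝕜 q = (-(q⁻¹ * q⁻¹)) • (1 : Sq 𝕜 q) := by
  have h : (Ideal.Quotient.mk _ (Polynomial.X ^ 2 + Polynomial.C (q⁻¹ * q⁻¹)) : Sq 𝕜 q) = 0 :=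
    Ideal.Quotient.eq_zero_iff_mem.2 (Ideal.subset_span rfl)
  have hC : (Ideal.Quotient.mk _ (Polynomial.C (q⁻¹ * q⁻¹)) : Sq 𝕜 q)
      = (q⁻¹ * q⁻¹) • (1 : Sq 𝕜 q) := by
    have : (Ideal.Quotient.mk _ (Polynomial.C (q⁻¹ * q⁻¹)) : Sq 𝕜 q)
        = algebraMap 𝕜 (Sq 𝕜 q) (q⁻¹ * q⁻¹) := rfl
    rw [this, Algebra.algebraMap_eq_smul_one]
  rw [map_add, map_pow, hC] at h
  have h2 : (lam 𝕜 q) ^ 2 = -((q⁻¹ * q⁻¹) • (1 : Sq 𝕜 q)) := by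
    rw [eq_neg_iff_add_eq_zero]; exact h
  rw [← sq, h2, neg_smul]

lemma lam_mul_lamInv (hq : q ≠ 0) : lam 𝕜 q * lamInv 𝕜 q = 1 := by
  rw [lamInv, mul_smul_comm, lam_sq, smul_smul]
  rw [show -(q * q) * -(q⁻¹ * q⁻¹) = (q * q⁻¹) * (q * q⁻¹) by ring, mul_inv_cancel₀ hq]
  simp

noncomputable def kap (n : ℕ) : Sq 𝕜 q := ((q ^ 2)⁻¹ ^ n) • lam 𝕜 q

noncomputable def kap' (n : ℕ) : Sq 𝕜 q := ((q ^ 2) ^ n) • lamInv 𝕜 q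

lemma kap_mul_kap' (hq : q ≠ 0) (n : ℕ) : kap 𝕜 q n * kap' 𝕜 q n = 1 := by
  rw [kap, kap', smul_mul_smul_comm, lam_mul_lamInv 𝕜 q hq, ← mul_pow,
    inv_mul_cancel₀ (pow_ne_zero 2 hq), one_pow, one_smul]

lemma kap_succ (n : ℕ) : kap 𝕜 q (n + 1) = (q ^ 2)⁻¹ • kap 𝕜 q n := by
  simp only [kap, pow_succ', mul_smul]

lemma kap'_succ (n : ℕ) : kap' 𝕜 q (n + 1) = (q ^ 2) • kap' 𝕜 q n := by
  simp only [kap', pow_succ', mul_smul]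

noncomputable def acoef : ℕ → Sq 𝕜 q
  | 0 => 0
  | n + 1 => acoef n + (q - q⁻¹)⁻¹ • (kap 𝕜 q n - kap' 𝕜 q n)

noncomputable def diag (g : ℕ → Sq 𝕜 q) : (ℕ → Sq 𝕜 q) →ₗ[𝕜] (ℕ → Sq 𝕜 q) where
  toFun f n := g n * f n
  map_add' f₁ f₂ := by funext n; simp [mul_add]
  map_smul' c f := by funext n; simp [mul_smul_comm]

noncomputable def Fop : (ℕ → Sq 𝕜 q) →ₗ[𝕜] (ℕ → Sq 𝕜 q) where
  toFun f n := match n with | 0 => 0 | m + 1 => f m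
  map_add' f₁ f₂ := by funext n; cases n <;> simp
  map_smul' c f := by funext n; cases n <;> simp

noncomputable def Eop : (ℕ → Sq 𝕜 q) →ₗ[𝕜] (ℕ → Sq 𝕜 q) where
  toFun f n := acoef 𝕜 q (n + 1) * f (n + 1)
  map_add' f₁ f₂ := by funext n; simp [mul_add]
  map_smul' c f := by funext n; simp [mul_smul_comm]

noncomputable def gens : Fin 4 → Module.End 𝕜 (ℕ → Sq 𝕜 q) :=
  ![Eop 𝕜 q, Fop 𝕜 q, diag 𝕜 q (kap 𝕜 q), diag 𝕜 q (kap' 𝕜 q)]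

lemma rel_holds (hq : q ≠ 0) : ∀ ⦃x y : FreeAlgebra 𝕜 (Fin 4)⦄, UqRel 𝕜 q x y →
    FreeAlgebra.lift 𝕜 (gens 𝕜 q) x = FreeAlgebra.lift 𝕜 (gens 𝕜 q) y := by
  intro x y h
  induction h with
  | KKinv =>
    simp only [map_mul, map_one, FreeAlgebra.lift_ι_apply, gens]
    refine LinearMap.ext fun f => funext fun n => ?_
    simp only [Module.End.mul_apply, diag, LinearMap.coe_mk, AddHom.coe_mk,
      Matrix.cons_val_two, Matrix.cons_val_three, Matrix.tail_cons, Matrix.head_cons,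
      Module.End.one_apply]
    rw [← mul_assoc, kap_mul_kap' 𝕜 q hq, one_mul]
  | KinvK =>
    simp only [map_mul, map_one, FreeAlgebra.lift_ι_apply, gens]
    refine LinearMap.ext fun f => funext fun n => ?_
    simp only [Module.End.mul_apply, diag, LinearMap.coe_mk, AddHom.coe_mk,
      Matrix.cons_val_two, Matrix.cons_val_three, Matrix.tail_cons, Matrix.head_cons,
      Module.End.one_apply]
    rw [← mul_assoc, mul_comm (kap' 𝕜 q n), kap_mul_kap' 𝕜 q hq, one_mul]
  | KE =>
    simp only [map_mul, map_smul, FreeAlgebra.lift_ι_apply, gens]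
    refine LinearMap.ext fun f => funext fun n => ?_
    simp only [Module.End.mul_apply, LinearMap.smul_apply, Pi.smul_apply, diag, Eop,
      LinearMap.coe_mk, AddHom.coe_mk, Matrix.cons_val_zero, Matrix.cons_val_two,
      Matrix.tail_cons, Matrix.head_cons]
    rw [kap_succ, smul_mul_assoc, mul_smul_comm, smul_smul,
      mul_inv_cancel₀ (pow_ne_zero 2 hq), one_smul, mul_left_comm]
  | KF =>
    simp only [map_mul, map_smul, FreeAlgebra.lift_ι_apply, gens]
    refine LinearMap.ext fun f => funext fun n => ?_
    simp only [Module.End.mul_apply, LinearMap.smul_apply, Pi.smul_apply, diag, Fop,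
      LinearMap.coe_mk, AddHom.coe_mk, Matrix.cons_val_one, Matrix.cons_val_two,
      Matrix.tail_cons, Matrix.head_cons]
    cases n with
    | zero => simp
    | succ m =>
      show kap 𝕜 q (m + 1) * f m = (q ^ 2)⁻¹ • (kap 𝕜 q m * f m)
      rw [kap_succ, smul_mul_assoc]
  | EF =>
    simp only [map_mul, map_sub, map_smul, FreeAlgebra.lift_ι_apply, gens]
    refine LinearMap.ext fun f => funext fun n => ?_
    simp only [LinearMap.sub_apply, Module.End.mul_apply, LinearMap.smul_apply,
      Pi.sub_apply, Pi.smul_apply, diag, Eop, Fop,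
      LinearMap.coe_mk, AddHom.coe_mk, Matrix.cons_val_zero, Matrix.cons_val_one,
      Matrix.cons_val_two, Matrix.cons_val_three, Matrix.tail_cons, Matrix.head_cons]
    have key : ∀ m : ℕ, acoef 𝕜 q (m + 1) - acoef 𝕜 q m
        = (q - q⁻¹)⁻¹ • (kap 𝕜 q m - kap' 𝕜 q m) := fun m => by
      rw [acoef]; ring
    cases n with
    | zero =>
      show acoef 𝕜 q (0 + 1) * f (0 + 1 - 1) - 0
        = (q - q⁻¹)⁻¹ • (kap 𝕜 q 0 * f 0 - kap' 𝕜 q 0 * f 0)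
      rw [sub_zero, ← sub_mul, ← smul_mul_assoc, ← key 0,
        show acoef 𝕜 q (0 + 1) - acoef 𝕜 q 0 = acoef 𝕜 q (0 + 1) by rw [acoef]; simp]
    | succ m =>
      show acoef 𝕜 q (m + 1 + 1) * f (m + 1) - acoef 𝕜 q (m + 1) * f (m + 1)
        = (q - q⁻¹)⁻¹ • (kap 𝕜 q (m + 1) * f (m + 1) - kap' 𝕜 q (m + 1) * f (m + 1))
      rw [← sub_mul, key (m + 1), smul_mul_assoc, sub_mul]

noncomputable def rep (hq : q ≠ 0) : Uq 𝕜 q →ₐ[𝕜] Module.End 𝕜 (ℕ → Sq 𝕜 q) :=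
  RingQuot.liftAlgHom 𝕜 ⟨FreeAlgebra.lift 𝕜 (gens 𝕜 q), rel_holds 𝕜 q hq⟩


lemma casimir_coeff (hq : q ≠ 0) (hq2 : q ^ 2 ≠ 1) :
    (q - q⁻¹) ^ 2 * ((q - q⁻¹)⁻¹ * (1 + q * q)) + q⁻¹ + q * (-(q * q)) = 0 := by
  have hd : q - q⁻¹ ≠ 0 := by
    intro h
    apply hq2
    have h1 : q = q⁻¹ := sub_eq_zero.mp h
    calc q ^ 2 = q * q := sq q
    _ = q * q⁻¹ := by rw [← h1]
    _ = 1 := mul_inv_cancel₀ hq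
  rw [← mul_assoc, sq, mul_assoc (q - q⁻¹), mul_inv_cancel₀ hd, mul_one]
  field_simp
  ring

lemma acoef_one : acoef 𝕜 q 1 = ((q - q⁻¹)⁻¹ * (1 + q * q)) • lam 𝕜 q := by
  rw [acoef, acoef, kap, kap', lamInv, pow_zero, pow_zero, one_smul, one_smul, mul_smul]
  module

lemma casimir_apply_zero (hq : q ≠ 0) (hq2 : q ^ 2 ≠ 1) (f : ℕ → Sq 𝕜 q) :
    ((((q - q⁻¹) ^ 2 • (Eop 𝕜 q * Fop 𝕜 q) + q⁻¹ • diag 𝕜 q (kap 𝕜 q)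
      + q • diag 𝕜 q (kap' 𝕜 q) : Module.End 𝕜 (ℕ → Sq 𝕜 q)) f) 0 : Sq 𝕜 q) = 0 := by
  show (q - q⁻¹) ^ 2 • (acoef 𝕜 q (0 + 1) * f 0) + q⁻¹ • (kap 𝕜 q 0 * f 0)
      + q • (kap' 𝕜 q 0 * f 0) = 0
  rw [show kap 𝕜 q 0 = lam 𝕜 q by rw [kap, pow_zero, one_smul],
    show kap' 𝕜 q 0 = (-(q * q)) • lam 𝕜 q by rw [kap', lamInv, pow_zero, one_smul],
    show (0 : ℕ) + 1 = 1 from rfl, acoef_one,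
    smul_mul_assoc, smul_mul_assoc, smul_smul, smul_smul, ← add_smul, ← add_smul,
    casimir_coeff 𝕜 q hq hq2, zero_smul]

noncomputable def v0 : ℕ → Sq 𝕜 q := fun n => if n = 0 then 1 else 0

instance : Nontrivial (Sq 𝕜 q) := by
  refine Ideal.Quotient.nontrivial_iff.mpr ?_
  rw [Ne, Ideal.span_singleton_eq_top]
  intro hu
  have h2 := Polynomial.natDegree_eq_zero_of_isUnit hu
  rw [Polynomial.natDegree_X_pow_add_C] at h2
  exact two_ne_zero h2

end UqNonInv

/-- The Casimir element of `U_q(sl₂)` is not invertible: `Λ b ≠ 1` for all `b`. -/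
theorem UqCasimir_not_invertible (𝕜 : Type*) [Field 𝕜] (q : 𝕜) (hq : q ≠ 0)
    (hroot : ∀ n : ℕ, 0 < n → q ^ n ≠ 1) (b : Uq 𝕜 q) :
    UqCasimir 𝕜 q * b ≠ 1 := by
  intro h
  have hq2 : q ^ 2 ≠ 1 := hroot 2 two_pos
  set φ := UqNonInv.rep 𝕜 q hq with hφdef
  have hgen : ∀ i, φ (UqGen 𝕜 q i) = UqNonInv.gens 𝕜 q i := fun i => by
    rw [hφdef, UqGen, UqNonInv.rep, RingQuot.liftAlgHom_mkAlgHom_apply,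
      FreeAlgebra.lift_ι_apply]
  have hφ : φ (UqCasimir 𝕜 q) * φ b = 1 := by rw [← map_mul, h, map_one]
  have hcas : φ (UqCasimir 𝕜 q)
      = (q - q⁻¹) ^ 2 • (UqNonInv.Eop 𝕜 q * UqNonInv.Fop 𝕜 q)
        + q⁻¹ • UqNonInv.diag 𝕜 q (UqNonInv.kap 𝕜 q)
        + q • UqNonInv.diag 𝕜 q (UqNonInv.kap' 𝕜 q) := by
    rw [UqCasimir]
    simp only [map_add, map_smul, map_mul, hgen]
    simp [UqNonInv.gens]
  have h0 := congrArg (fun T : Module.End 𝕜 (ℕ → UqNonInv.Sq 𝕜 q) =>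
    (T (UqNonInv.v0 𝕜 q)) 0) hφ
  simp only [Module.End.mul_apply, Module.End.one_apply] at h0
  rw [hcas, UqNonInv.casimir_apply_zero 𝕜 q hq hq2] at h0
  have hv : (UqNonInv.v0 𝕜 q) 0 = 1 := if_pos rfl
  rw [hv] at h0
  exact zero_ne_one h0
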